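/- There exists a constant C > 0, depending only on H, such that for every integer n ≥ 1 and every t ∈ [0,1], |∫₀^t ΔK(t,s) ds| ≤ C · min(n^{−(H+1/2)}, n^{−1} t^{H−1/2}). -/

import Mathlib

open MeasureTheory intervalIntegral

/-- Grid projection `η(t) = ⌊nt⌋/n`. -/
noncomputable def gridEta (n : ℕ) (t : ℝ) : ℝ := (⌊(n : ℝ) * t⌋ : ℝ) / n

/-- The fractional kernel `K(t,s) = (t-s)^(H-1/2)` for `s < t`, and `0` otherwise. -/
noncomputable def fracK (H t s : ℝ) : ℝ := if s < t then (t - s) ^ (H - 1/2) else 0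

/-- The discretization error kernel `ΔK(t,s) = K(η(t),s) - K(t,s)`. -/
noncomputable def deltaK (H : ℝ) (n : ℕ) (t s : ℝ) : ℝ :=
  fracK H (gridEta n t) s - fracK H t s

section Aux

variable {H : ℝ}

lemma fracK_eqOn (hH : H - 1/2 ≠ 0) {c : ℝ} (hc : 0 ≤ c) :
    Set.EqOn (fracK H c) (fun s => (c - s) ^ (H - 1/2)) (Set.uIcc 0 c) := by
  intro s hs
  rw [Set.uIcc_of_le hc] at hs
  rcases lt_or_eq_of_le hs.2 with h | h
  · simp [fracK, h]
  · rw [h]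
    simp only [fracK, lt_irrefl, if_false, sub_self]
    rw [Real.zero_rpow hH]

lemma fracK_eqOn_zero {c t : ℝ} (hct : c ≤ t) :
    Set.EqOn (fracK H c) (fun _ => (0 : ℝ)) (Set.uIcc c t) := by
  intro s hs
  rw [Set.uIcc_of_le hct] at hs
  simp [fracK, not_lt.mpr hs.1]

lemma intInt_fracK (hH0 : 0 < H) (hH1 : H < 1/2) {c t : ℝ} (hc : 0 ≤ c) (hct : c ≤ t) :
    IntervalIntegrable (fracK H c) volume 0 t := by
  have h1 : IntervalIntegrable (fracK H c) volume 0 c := by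
    have hg : IntervalIntegrable (fun s => (c - s) ^ (H - 1/2)) volume 0 c := by
      simpa using (intervalIntegral.intervalIntegrable_rpow' (a := c) (b := 0)
        (by linarith : (-1 : ℝ) < H - 1/2)).comp_sub_left c
    exact hg.congr
      fun s hs => (fracK_eqOn (by linarith : H - 1/2 ≠ 0) hc (Set.uIoc_subset_uIcc hs)).symm
  have h2 : IntervalIntegrable (fracK H c) volume c t := by
    have hg : IntervalIntegrable (fun _ : ℝ => (0 : ℝ)) volume c t := intervalIntegrable_const
    exact hg.congr
      fun s hs => (fracK_eqOn_zero hct (Set.uIoc_subset_uIcc hs)).symm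
  exact h1.trans h2

lemma integral_fracK (hH0 : 0 < H) (hH1 : H < 1/2) {c t : ℝ} (hc : 0 ≤ c) (hct : c ≤ t) :
    ∫ s in (0:ℝ)..t, fracK H c s = c ^ (H + 1/2) / (H + 1/2) := by
  have key : ∫ s in (0:ℝ)..c, fracK H c s = c ^ (H + 1/2) / (H + 1/2) := by
    rw [intervalIntegral.integral_congr (fracK_eqOn (by linarith) hc)]
    rw [intervalIntegral.integral_comp_sub_left (fun x => x ^ (H - 1/2)) c]
    rw [sub_self, sub_zero, integral_rpow (Or.inl (by linarith))]
    rw [Real.zero_rpow (by linarith : H - 1/2 + 1 ≠ 0),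
      show H - 1/2 + 1 = H + 1/2 by ring]
    ring
  have h2 : ∫ s in c..t, fracK H c s = 0 := by
    rw [intervalIntegral.integral_congr (fracK_eqOn_zero hct)]
    simp
  have h1 : IntervalIntegrable (fracK H c) volume 0 c := by
    have := intInt_fracK hH0 hH1 hc (le_refl c); exact this
  have h1' : IntervalIntegrable (fracK H c) volume c t := by
    have hg : IntervalIntegrable (fun _ : ℝ => (0 : ℝ)) volume c t := intervalIntegrable_const
    exact hg.congr
      fun s hs => (fracK_eqOn_zero hct (Set.uIoc_subset_uIcc hs)).symm
  rw [← intervalIntegral.integral_add_adjacent_intervals h1 h1', key, h2, add_zero]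

lemma rpow_sub_le_rpow_sub {x y p : ℝ} (hy : 0 ≤ y) (hxy : y ≤ x) (hp : 0 ≤ p) (hp1 : p ≤ 1) :
    x ^ p ≤ y ^ p + (x - y) ^ p := by
  have hd : 0 ≤ x - y := sub_nonneg.2 hxy
  have h := NNReal.rpow_add_le_add_rpow y.toNNReal (x - y).toNNReal hp hp1
  rw [← Real.toNNReal_add hy hd, add_sub_cancel] at h
  have h2 := NNReal.coe_le_coe.2 h
  rw [NNReal.coe_add, NNReal.coe_rpow, NNReal.coe_rpow, NNReal.coe_rpow,
    Real.coe_toNNReal x (hy.trans hxy), Real.coe_toNNReal y hy, Real.coe_toNNReal _ hd] at h2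
  exact h2

end Aux

set_option maxHeartbeats 1000000 in
/-- `|∫₀^t ΔK(t,s) ds| ≤ C min(n^(-(H+1/2)), n⁻¹ t^(H-1/2))`
uniformly in `n ≥ 1`, `t ∈ [0,1]`. -/
theorem weak_error_first_moment_bound (H : ℝ) (hH0 : 0 < H) (hH1 : H < 1/2) :
    ∃ C > 0, ∀ n : ℕ, 1 ≤ n → ∀ t ∈ Set.Icc (0 : ℝ) 1,
      |∫ s in (0 : ℝ)..t, deltaK H n t s|
        ≤ C * min ((n : ℝ) ^ (-(H + 1/2))) ((n : ℝ)⁻¹ * t ^ (H - 1/2)) := by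
  obtain ⟨a, ha_def⟩ : ∃ a : ℝ, a = H + 1/2 := ⟨_, rfl⟩
  have ha0 : 0 < a := by rw [ha_def]; linarith
  have ha1 : a ≤ 1 := by rw [ha_def]; linarith
  have ha1' : a < 1 := by rw [ha_def]; linarith
  refine ⟨2 / a, by positivity, ?_⟩
  intro n hn t ht
  obtain ⟨ht0, ht1⟩ := ht
  rw [show -(H + 1/2) = -a by rw [ha_def],
    show H - 1/2 = a - 1 by rw [ha_def]; ring]
  have hn0 : (0:ℝ) < n := by exact_mod_cast Nat.pos_of_ne_zero (by omega)
  set c : ℝ := gridEta n t with hc_def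
  have hfl0 : (0:ℤ) ≤ ⌊(n : ℝ) * t⌋ := Int.floor_nonneg.mpr (by positivity)
  have hc0 : 0 ≤ c := div_nonneg (by exact_mod_cast hfl0) hn0.le
  have hfl_le : ((⌊(n : ℝ) * t⌋ : ℝ)) ≤ (n:ℝ) * t := Int.floor_le _
  have hfl_gt : (n:ℝ) * t < (⌊(n : ℝ) * t⌋ : ℝ) + 1 := Int.lt_floor_add_one _
  have hct : c ≤ t := by
    rw [hc_def, gridEta, div_le_iff₀ hn0]
    nlinarith
  have htc : t - c ≤ (n:ℝ)⁻¹ := by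
    rw [hc_def, gridEta, sub_le_iff_le_add, ← sub_le_iff_le_add',
      show t - (n:ℝ)⁻¹ = ((n:ℝ) * t - 1) / n by field_simp,
      div_le_div_iff₀ hn0 hn0]
    nlinarith
  -- value of the integral
  have hval : ∫ s in (0:ℝ)..t, deltaK H n t s = c ^ a / a - t ^ a / a := by
    have h1 := intInt_fracK hH0 hH1 hc0 hct
    have h2 := intInt_fracK hH0 hH1 ht0 (le_refl t)
    rw [show (fun s => deltaK H n t s) = fun s => fracK H c s - fracK H t s from rfl]
    rw [intervalIntegral.integral_sub h1 h2,
      integral_fracK hH0 hH1 hc0 hct, integral_fracK hH0 hH1 ht0 (le_refl t), ha_def]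
  have hca : c ^ a ≤ t ^ a := Real.rpow_le_rpow hc0 hct ha0.le
  have habs : |∫ s in (0:ℝ)..t, deltaK H n t s| = (t ^ a - c ^ a) / a := by
    rw [hval, abs_of_nonpos (by apply sub_nonpos.mpr; gcongr)]
    ring
  rw [habs]
  -- Bound 1
  have hnn : (0:ℝ) ≤ (n:ℝ) ^ (-a) := Real.rpow_nonneg hn0.le _
  have hB1 : (t ^ a - c ^ a) / a ≤ (2 / a) * (n:ℝ) ^ (-a) := by
    have hsub : t ^ a - c ^ a ≤ (t - c) ^ a :=
      sub_le_iff_le_add'.mpr (rpow_sub_le_rpow_sub hc0 hct ha0.le ha1)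
    have h2 : (t - c) ^ a ≤ ((n:ℝ)⁻¹) ^ a :=
      Real.rpow_le_rpow (by linarith) htc ha0.le
    have h3 : ((n:ℝ)⁻¹) ^ a = (n:ℝ) ^ (-a) := by
      rw [Real.rpow_neg hn0.le, ← Real.inv_rpow hn0.le]
    have heq : 2 / a * (n:ℝ) ^ (-a) * a = 2 * (n:ℝ) ^ (-a) := by
      field_simp
    rw [div_le_iff₀ ha0, heq]
    rw [h3] at h2
    linarith
  -- Bound 2
  have hB2 : (t ^ a - c ^ a) / a ≤ (2 / a) * ((n:ℝ)⁻¹ * t ^ (a - 1)) := by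
    rcases eq_or_lt_of_le ht0 with rfl | ht0'
    · have hc00 : c = 0 := le_antisymm hct hc0
      rw [hc00, Real.zero_rpow ha0.ne',
        Real.zero_rpow (show a - 1 ≠ 0 by intro h; rw [sub_eq_zero] at h; exact ha1'.ne h)]
      simp
    have hta : t ^ (a - 1) = t ^ a / t := by
      rw [eq_div_iff ht0'.ne', ← Real.rpow_add_one ht0'.ne',
        show a - 1 + 1 = a by ring]
    have hpow : (0:ℝ) < t ^ (a - 1) := Real.rpow_pos_of_pos ht0' _
    rcases eq_or_lt_of_le hc0 with hc0' | hc0'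
    · -- c = 0 : then nt < 1, so t ≤ 1/n
      have hfl : (⌊(n : ℝ) * t⌋ : ℝ) = 0 := by
        have h := hc0'.symm
        rw [hc_def, gridEta, div_eq_zero_iff] at h
        rcases h with h | h
        · exact h
        · exact absurd h hn0.ne'
      have htn : t ≤ (n:ℝ)⁻¹ := by
        rw [← one_div, le_div_iff₀ hn0]
        nlinarith
      rw [← hc0', Real.zero_rpow ha0.ne', sub_zero]
      have ht1' : t ^ a = t * t ^ (a - 1) := by
        rw [hta, mul_div_assoc', mul_comm, mul_div_assoc, div_self ht0'.ne', mul_one]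
      have heq : 2 / a * ((n:ℝ)⁻¹ * t ^ (a - 1)) * a
          = 2 * ((n:ℝ)⁻¹ * t ^ (a - 1)) := by field_simp; try ring
      rw [ht1', div_le_iff₀ ha0, heq]
      have h1 : t * t ^ (a - 1) ≤ (n:ℝ)⁻¹ * t ^ (a - 1) :=
        mul_le_mul_of_nonneg_right htn hpow.le
      have h2 : (0:ℝ) ≤ (n:ℝ)⁻¹ * t ^ (a - 1) :=
        mul_nonneg (inv_nonneg.mpr hn0.le) hpow.le
      linarith
    · -- c > 0 : Bernoulli
      have hnc : (n:ℝ)⁻¹ ≤ c := by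
        have h1 : (1:ℤ) ≤ ⌊(n : ℝ) * t⌋ := by
          by_contra h
          push_neg at h
          have h2 : ⌊(n : ℝ) * t⌋ ≤ 0 := by omega
          have h3 : (⌊(n : ℝ) * t⌋ : ℝ) ≤ 0 := by exact_mod_cast h2
          have h4 : c ≤ 0 := by
            rw [hc_def, gridEta]
            exact div_nonpos_of_nonpos_of_nonneg h3 hn0.le
          linarith
        rw [hc_def, gridEta, le_div_iff₀ hn0, inv_mul_cancel₀ hn0.ne']
        exact_mod_cast h1
      have ht2c : t ≤ 2 * c := by linarith
      have hbern : (t / c) ^ a ≤ 1 + a * ((t - c) / c) := by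
        have hd : (0:ℝ) ≤ (t - c) / c := div_nonneg (by linarith) hc0
        have hb := rpow_one_add_le_one_add_mul_self
          (show (-1:ℝ) ≤ (t - c) / c by linarith) ha0.le ha1
        rw [show (1:ℝ) + (t - c)/c = t / c by field_simp; ring] at hb
        exact hb
      have hkey : t ^ a - c ^ a ≤ a * c ^ (a - 1) * (t - c) := by
        have hcpa : (0:ℝ) < c ^ a := Real.rpow_pos_of_pos hc0' _
        have h1 : t ^ a / c ^ a ≤ 1 + a * ((t - c) / c) := by
          rw [← Real.div_rpow ht0 hc0]; exact hbern
        rw [div_le_iff₀ hcpa] at h1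
        have h2 : (1 + a * ((t - c) / c)) * c ^ a
            = c ^ a + a * (c ^ a / c) * (t - c) := by field_simp
        have h3 : c ^ a / c = c ^ (a - 1) := (Real.rpow_sub_one hc0'.ne' a).symm
        rw [h2, h3] at h1
        linarith
      have htp : (0:ℝ) < t ^ (a - 1) := Real.rpow_pos_of_pos ht0' _
      have hc2t : c ^ (a - 1) ≤ 2 * t ^ (a - 1) := by
        have h1 : (2 * c) ^ (a - 1) ≤ t ^ (a - 1) :=
          Real.rpow_le_rpow_of_nonpos ht0' ht2c (by linarith)
        have h2 : (2 * c) ^ (a - 1) = 2 ^ (a - 1) * c ^ (a - 1) :=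
          Real.mul_rpow (by norm_num) hc0
        have h3 : (2:ℝ) ^ (-1:ℝ) ≤ 2 ^ (a - 1) :=
          Real.rpow_le_rpow_of_exponent_le (by norm_num) (by rw [ha_def]; linarith)
        rw [Real.rpow_neg_one] at h3
        have hcp : (0:ℝ) < c ^ (a - 1) := Real.rpow_pos_of_pos hc0' _
        nlinarith
      have hfin : t ^ a - c ^ a ≤ 2 * ((n:ℝ)⁻¹ * t ^ (a - 1)) := by
        have h0 : (0:ℝ) ≤ t - c := by linarith
        have s1 : a * c ^ (a - 1) * (t - c) ≤ a * (2 * t ^ (a - 1)) * (n:ℝ)⁻¹ :=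
          mul_le_mul (mul_le_mul_of_nonneg_left hc2t ha0.le) htc h0
            (mul_nonneg ha0.le (by linarith))
        have s2 : a * (2 * t ^ (a - 1)) * (n:ℝ)⁻¹ ≤ 1 * (2 * t ^ (a - 1)) * (n:ℝ)⁻¹ :=
          mul_le_mul_of_nonneg_right
            (mul_le_mul_of_nonneg_right ha1 (by linarith)) (inv_nonneg.mpr hn0.le)
        have s3 : (1:ℝ) * (2 * t ^ (a - 1)) * (n:ℝ)⁻¹
            = 2 * ((n:ℝ)⁻¹ * t ^ (a - 1)) := by ring
        linarith
      have heq : 2 / a * ((n:ℝ)⁻¹ * t ^ (a - 1)) * a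
          = 2 * ((n:ℝ)⁻¹ * t ^ (a - 1)) := by field_simp; try ring
      rw [div_le_iff₀ ha0, heq]
      exact hfin
  rcases le_total ((n:ℝ) ^ (-a)) ((n:ℝ)⁻¹ * t ^ (a - 1)) with h | h
  · rw [min_eq_left h]; exact hB1
  · rw [min_eq_right h]; exact hB2
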